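/- Suppose m, w, t ≥ 0 are reals with m ≥ w ≥ t, r ≥ 16, and 2^m ≤ 2^t (mr/w)^w. Then m ≤ t + w·log₂(2r·log₂ r). -/
import Mathlib

open Real

private lemma mono_aux18 {a b : ℝ} (ha : 2 ≤ a) (hab : a < b) :
    a - Real.logb 2 a < b - Real.logb 2 b := by
  have h2 := Real.log_two_gt_d9
  have ha0 : (0:ℝ) < a := by linarith
  have hb0 : (0:ℝ) < b := by linarith
  have hlog : Real.log (b / a) ≤ b / a - 1 :=
    Real.log_le_sub_one_of_pos (by positivity)
  have hdiv : Real.log (b / a) = Real.log b - Real.log a :=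
    Real.log_div (by positivity) (by positivity)
  have hba : b / a - 1 = (b - a) / a := by field_simp
  have hll : Real.log b - Real.log a ≤ (b - a) / a := by
    rw [← hdiv, ← hba]; exact hlog
  have h3 : (b - a) / a ≤ (b - a) / 2 := by gcongr
  have h4 : Real.log b - Real.log a < (b - a) * Real.log 2 := by nlinarith
  have key : Real.logb 2 b - Real.logb 2 a < b - a := by
    rw [Real.logb, Real.logb, div_sub_div_same, div_lt_iff₀ (by linarith)]
    exact h4
  linarith

private lemma r_ge_4logb {r : ℝ} (hr : 16 ≤ r) : 4 * Real.logb 2 r ≤ r := by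
  have h2 := Real.log_two_gt_d9
  have hl2 : (0:ℝ) < Real.log 2 := by linarith
  have hr0 : (0:ℝ) < r := by linarith
  have hlog : Real.log (r / 16) ≤ r / 16 - 1 :=
    Real.log_le_sub_one_of_pos (by positivity)
  have hdiv : Real.log (r / 16) = Real.log r - Real.log 16 :=
    Real.log_div (by positivity) (by norm_num)
  have h16 : Real.log 16 = 4 * Real.log 2 := by
    have : (16:ℝ) = 2 ^ (4:ℕ) := by norm_num
    rw [this, Real.log_pow]; push_cast; ring
  have hlr : Real.log r ≤ 4 * Real.log 2 + r / 16 - 1 := by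
    rw [hdiv, h16] at hlog; linarith
  rw [Real.logb, mul_div_assoc', div_le_iff₀ hl2]
  nlinarith [mul_nonneg (by linarith : (0:ℝ) ≤ r - 16) (by linarith : (0:ℝ) ≤ Real.log 2 - 1/4)]

theorem bartlett_lemma18 (m w t r : ℝ) (ht : 0 ≤ t) (htw : t ≤ w) (hwm : w ≤ m)
    (hr : 16 ≤ r) (h : (2 : ℝ) ^ m ≤ (2 : ℝ) ^ t * (m * r / w) ^ w) :
    m ≤ t + w * Real.logb 2 (2 * r * Real.logb 2 r) := by
  have h2 := Real.log_two_gt_d9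
  have hl2 : (0:ℝ) < Real.log 2 := by linarith
  have h12 : (1:ℝ) < 2 := one_lt_two
  have hr0 : (0:ℝ) < r := by linarith
  rcases eq_or_lt_of_le (ht.trans htw) with hw0 | hw0
  · -- w = 0, hence t = 0
    have hw : w = 0 := hw0.symm
    have ht0 : t = 0 := le_antisymm (hw ▸ htw) ht
    subst hw; subst ht0
    simp only [Real.rpow_zero, mul_one, one_mul] at h ⊢
    have hm0 : m ≤ 0 := by
      have h' : (2:ℝ) ^ m ≤ (2:ℝ) ^ (0:ℝ) := by simpa using h
      exact (Real.rpow_le_rpow_left_iff h12).mp h'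
    linarith
  · -- 0 < w
    have hm0 : (0:ℝ) < m := hw0.trans_le hwm
    have hx : (0:ℝ) < m * r / w := by positivity
    have h16 : Real.log 16 = 4 * Real.log 2 := by
      have e : (16:ℝ) = 2 ^ (4:ℕ) := by norm_num
      rw [e, Real.log_pow]; push_cast; ring
    have hlb16 : Real.logb 2 (16:ℝ) = 4 := by
      rw [Real.logb, h16]; field_simp
    have hlbr : 4 ≤ Real.logb 2 r := by
      rw [← hlb16]
      exact (Real.logb_le_logb h12 (by norm_num) hr0).mpr hr
    have hlog : m ≤ t + w * Real.logb 2 (m / w * r) := by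
      have h1 : Real.logb 2 ((2:ℝ) ^ m) ≤ Real.logb 2 ((2:ℝ) ^ t * (m * r / w) ^ w) :=
        (Real.logb_le_logb h12 (Real.rpow_pos_of_pos two_pos m)
          (mul_pos (Real.rpow_pos_of_pos two_pos t) (Real.rpow_pos_of_pos hx w))).mpr h
      rw [Real.logb_rpow (by norm_num) (by norm_num),
        Real.logb_mul (ne_of_gt (Real.rpow_pos_of_pos two_pos t))
          (ne_of_gt (Real.rpow_pos_of_pos hx w)),
        Real.logb_rpow (by norm_num) (by norm_num)] at h1
      have h3 : Real.logb 2 ((m * r / w) ^ w) = w * Real.logb 2 (m * r / w) := by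
        rw [Real.logb, Real.log_rpow hx, Real.logb]; ring
      have h4 : m * r / w = m / w * r := by ring
      rw [h3, h4] at h1
      linarith
    have hu1 : (1:ℝ) ≤ m / w := (one_le_div hw0).mpr hwm
    have hur : (0:ℝ) < m / w * r := by positivity
    have hsplit : Real.logb 2 (m / w * r) = Real.logb 2 (m / w) + Real.logb 2 r :=
      Real.logb_mul (by positivity) (ne_of_gt hr0)
    have hu_le : m / w ≤ t / w + Real.logb 2 (m / w * r) := by
      have h5 : (t + w * Real.logb 2 (m / w * r)) / w
          = t / w + Real.logb 2 (m / w * r) := by field_simp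
      calc m / w ≤ (t + w * Real.logb 2 (m / w * r)) / w := by gcongr
        _ = _ := h5
    have hs1 : t / w ≤ 1 := (div_le_one hw0).mpr htw
    have huc : m / w ≤ 2 * Real.logb 2 r := by
      by_contra hlt
      push_neg at hlt
      have hmono := mono_aux18 (show (2:ℝ) ≤ 2 * Real.logb 2 r by linarith) hlt
      have h4l := r_ge_4logb hr
      have hc_le : Real.logb 2 (2 * Real.logb 2 r) ≤ Real.logb 2 r - 1 := by
        have hrc : 2 * Real.logb 2 r ≤ r / 2 := by linarith
        have hh := (Real.logb_le_logb h12 (by linarith) (by linarith : (0:ℝ) < r / 2)).mpr hrc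
        rwa [Real.logb_div (ne_of_gt hr0) (by norm_num),
          Real.logb_self_eq_one h12] at hh
      rw [hsplit] at hu_le
      linarith
    have hfin : Real.logb 2 (m / w * r) ≤ Real.logb 2 (2 * r * Real.logb 2 r) := by
      apply (Real.logb_le_logb h12 hur (by nlinarith)).mpr
      nlinarith
    nlinarith [mul_le_mul_of_nonneg_left hfin (le_of_lt hw0)]
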